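/- Let q be an indeterminate with [2]_q = q + q^{-1}. In the variables a, b₁, b₂, c over Q(q), set P(a,b₁,b₂,c) = (qa − b₂)/(a − qb₂) + (qc − b₁)/(c − qb₁) − [2]_q (qa − b₂)(qc − b₁)/((a − qb₂)(c − qb₁)) + (qa − b₂)(qc − b₁)(qc − b₂)/((a − qb₂)(c − qb₁)(c − qb₂)) + (qa − b₁)(qa − b₂)(qc − b₁)/((a − qb₁)(a − qb₂)(c − qb₁)). Then the symmetrization in b₁, b₂ of P(a,b₁,b₂,c)/(b₁ − b₂) vanishes: P(a,b₁,b₂,c)/(b₁−b₂) + P(a,b₂,b₁,c)/(b₂−b₁) = 0. -/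

import Mathlib

/-- The field `ℚ(q)(a,b₁,b₂,c)` of rational functions in `q, a, b₁, b₂, c`. -/
abbrev KK := FractionRing (MvPolynomial (Fin 5) ℚ)

noncomputable def qq : KK := algebraMap (MvPolynomial (Fin 5) ℚ) KK (MvPolynomial.X 0)
noncomputable def aa : KK := algebraMap (MvPolynomial (Fin 5) ℚ) KK (MvPolynomial.X 1)
noncomputable def bb1 : KK := algebraMap (MvPolynomial (Fin 5) ℚ) KK (MvPolynomial.X 2)
noncomputable def bb2 : KK := algebraMap (MvPolynomial (Fin 5) ℚ) KK (MvPolynomial.X 3)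
noncomputable def cc : KK := algebraMap (MvPolynomial (Fin 5) ℚ) KK (MvPolynomial.X 4)

/-- The rational function `P(a,b₁,b₂,c)` from the quartic Serre relation. -/
noncomputable def P7 (a b1 b2 c : KK) : KK :=
  (qq * a - b2) / (a - qq * b2) + (qq * c - b1) / (c - qq * b1)
    - (qq + qq⁻¹) * ((qq * a - b2) * (qq * c - b1)) / ((a - qq * b2) * (c - qq * b1))
    + ((qq * a - b2) * (qq * c - b1) * (qq * c - b2)) /
        ((a - qq * b2) * (c - qq * b1) * (c - qq * b2))
    + ((qq * a - b1) * (qq * a - b2) * (qq * c - b1)) /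
        ((a - qq * b1) * (a - qq * b2) * (c - qq * b1))

/-! The rational function `P` is symmetric in `b₁, b₂` (clearing denominators turns this into a
polynomial identity), while `b₁ − b₂` is antisymmetric, so the two summands cancel. The
denominators do not vanish because they are nonzero polynomials in independent variables, as
one sees by evaluating at a single point. -/

theorem MvPolynomial.algebraMap_ne_zero_of_eval_ne_zero {σ R K : Type*} [CommRing R]
    [CommRing K] [Algebra (MvPolynomial σ R) K] [IsFractionRing (MvPolynomial σ R) K]
    {p : MvPolynomial σ R} (x : σ → R) (h : MvPolynomial.eval x p ≠ 0) :
    algebraMap (MvPolynomial σ R) K p ≠ 0 := fun hp =>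
  h (by rw [IsFractionRing.injective _ K (hp.trans (map_zero _).symm), map_zero])

theorem X_sub_qq_mul_X_ne_zero (x : Fin 5 → ℚ) (i j : Fin 5) (h : x i - x 0 * x j ≠ 0) :
    algebraMap (MvPolynomial (Fin 5) ℚ) KK (MvPolynomial.X i)
      - qq * algebraMap (MvPolynomial (Fin 5) ℚ) KK (MvPolynomial.X j) ≠ 0 := by
  rw [qq, ← map_mul, ← map_sub]
  exact MvPolynomial.algebraMap_ne_zero_of_eval_ne_zero x (by simpa using h)

theorem P7_swap (a b1 b2 c : KK) (hq : qq ≠ 0) (h1 : a - qq * b1 ≠ 0) (h2 : a - qq * b2 ≠ 0)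
    (h3 : c - qq * b1 ≠ 0) (h4 : c - qq * b2 ≠ 0) : P7 a b2 b1 c = P7 a b1 b2 c := by
  unfold P7
  field_simp
  ring

/-- The symmetrization in `b₁, b₂` of `P(a,b₁,b₂,c)/(b₁ − b₂)` vanishes. -/
theorem stmt7 :
    P7 aa bb1 bb2 cc / (bb1 - bb2) + P7 aa bb2 bb1 cc / (bb2 - bb1) = 0 := by
  let x : Fin 5 → ℚ := ![2, 1, 3, 5, 7]
  have hq : qq ≠ 0 := MvPolynomial.algebraMap_ne_zero_of_eval_ne_zero x (by simp [x])
  have hsymm : P7 aa bb2 bb1 cc = P7 aa bb1 bb2 cc :=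
    P7_swap aa bb1 bb2 cc hq (X_sub_qq_mul_X_ne_zero x 1 2 (by simp [x]; norm_num))
      (X_sub_qq_mul_X_ne_zero x 1 3 (by simp [x]; norm_num))
      (X_sub_qq_mul_X_ne_zero x 4 2 (by simp [x]; norm_num))
      (X_sub_qq_mul_X_ne_zero x 4 3 (by simp [x]; norm_num))
  rw [hsymm, ← neg_sub bb1 bb2, div_neg, add_neg_cancel]
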